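/- arXiv:2009.06918 — 4 statements merged into one kernel-verified Lean document; each statement's English description precedes it below -/
import Mathlib

section
/- Let Λ and D be measurable spaces, Q : Λ → D a measurable map, μ_init a probability measure on Λ (the initial measure), and ν = Q_*μ_init its push-forward (the predicted measure). Let P_obs be a probability measure on D that is absolutely continuous with respect to ν, and let r = dP_obs/dν be its Radon–Nikodym derivative. Then the updated measure μ_up, defined as the measure with density λ ↦ r(Q(λ)) with respect to μ_init, is observation-consistent: its push-forward under Q equals the observed measure, Q_*μ_up = P_obs. -/
open MeasureTheory
open scoped ENNReal

/-- The updated measure, given by reweighting the initial measure by the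
Radon–Nikodym derivative `r = dP_obs/dν` (with `ν = Q_*μ_init`) composed with the
QoI map `Q`, is observation-consistent: its push-forward under `Q` is `P_obs`. -/
theorem updated_measure_observation_consistent
    {Λ D : Type*} [MeasurableSpace Λ] [MeasurableSpace D]
    (Q : Λ → D) (hQ : Measurable Q)
    (μ_init : Measure Λ) [IsProbabilityMeasure μ_init]
    (P_obs : Measure D) [IsProbabilityMeasure P_obs]
    (habs : P_obs ≪ Measure.map Q μ_init) :
    Measure.map Q
      (μ_init.withDensity (fun l => P_obs.rnDeriv (Measure.map Q μ_init) (Q l)))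
      = P_obs := by
  have hr : Measurable (P_obs.rnDeriv (Measure.map Q μ_init)) :=
    Measure.measurable_rnDeriv _ _
  ext s hs
  rw [Measure.map_apply hQ hs, withDensity_apply _ (hQ hs),
    ← setLIntegral_map hs hr hQ,
    Measure.setLIntegral_rnDeriv habs]
end

section
/- Let Λ be a measurable space partitioned into finitely many measurable sets Λ_1, …, Λ_K, let μ_init be a probability measure on Λ with μ_init(Λ_k) > 0 for each k, and let μ_k denote the conditional probability measure of μ_init on Λ_k (the restriction of μ_init to Λ_k normalized by μ_init(Λ_k)). For each k, let Q_k : Λ → D_k be a measurable map into a measurable space, let ν_k = (Q_k)_*μ_k, let P_obs,k be a probability measure on D_k absolutely continuous with respect to ν_k, and let R_k = dP_obs,k/dν_k. Let w_1, …, w_K be nonnegative real numbers with Σ_{k=1}^K w_k = 1. Then the updated measure μ_up defined by μ_up(A) = Σ_{k=1}^K w_k ∫_{A∩Λ_k} R_k(Q_k(λ)) dμ_k(λ) is a probability measure on Λ. -/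
open MeasureTheory ProbabilityTheory
open scoped ENNReal NNReal

/-!
Restricting the conditional measure `μ[|Λₖ]` to `Λₖ` changes nothing, and each summand
`μ[|Λₖ].withDensity (Rₖ ∘ Qₖ)` pushes forward under `Qₖ` to `P_obs,k`, hence has total mass one.
The update is therefore a convex combination of probability measures.
-/

namespace MeasureTheory

variable {α β : Type*} [MeasurableSpace α] [MeasurableSpace β]

lemma Measure.map_withDensity_comp {μ : Measure α} {f : α → β} {g : β → ℝ≥0∞}
    (hf : Measurable f) (hg : Measurable g) :
    (μ.withDensity (g ∘ f)).map f = (μ.map f).withDensity g := by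
  ext s hs
  rw [Measure.map_apply hf hs, withDensity_apply _ (hf hs), withDensity_apply _ hs,
    setLIntegral_map hs hg hf, Function.comp_def]

lemma Measure.map_withDensity_rnDeriv_comp {μ : Measure α} {ν : Measure β} {f : α → β}
    [ν.HaveLebesgueDecomposition (μ.map f)] (hf : Measurable f) (hν : ν ≪ μ.map f) :
    (μ.withDensity fun x => ν.rnDeriv (μ.map f) (f x)).map f = ν := by
  rw [← Function.comp_def, Measure.map_withDensity_comp hf (Measure.measurable_rnDeriv _ _),
    Measure.withDensity_rnDeriv_eq _ _ hν]

lemma isProbabilityMeasure_withDensity_rnDeriv_comp {μ : Measure α} {ν : Measure β} {f : α → β}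
    [IsProbabilityMeasure ν] [ν.HaveLebesgueDecomposition (μ.map f)] (hf : Measurable f)
    (hν : ν ≪ μ.map f) :
    IsProbabilityMeasure (μ.withDensity fun x => ν.rnDeriv (μ.map f) (f x)) := by
  rw [← Measure.isProbabilityMeasure_map_iff hf.aemeasurable,
    Measure.map_withDensity_rnDeriv_comp hf hν]
  infer_instance

lemma isProbabilityMeasure_sum_smul {ι : Type*} (s : Finset ι) (μ : ι → Measure α)
    [∀ i, IsProbabilityMeasure (μ i)] (w : ι → ℝ≥0) (hw : ∑ i ∈ s, w i = 1) :
    IsProbabilityMeasure (∑ i ∈ s, w i • μ i) := by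
  constructor
  simp only [Measure.coe_finsetSum, Finset.sum_apply, Measure.smul_apply, measure_univ,
    ENNReal.smul_def, smul_eq_mul, mul_one, ← ENNReal.ofNNReal_finsetSum, hw, ENNReal.coe_one]

end MeasureTheory

namespace ProbabilityTheory

lemma cond_restrict_self {α : Type*} [MeasurableSpace α] (μ : Measure α) (s : Set α) :
    (μ[|s]).restrict s = μ[|s] := by
  rw [cond, Measure.restrict_smul, Measure.restrict_restrict_of_subset subset_rfl]

end ProbabilityTheory

theorem clustered_update_isProbabilityMeasure_general
    {Λ : Type*} [MeasurableSpace Λ] {K : ℕ}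
    (Λs : Fin K → Set Λ)
    (μ_init : Measure Λ)
    (D : Fin K → Type*) [∀ k, MeasurableSpace (D k)]
    (Q : ∀ k, Λ → D k) (hQ : ∀ k, Measurable (Q k))
    (P_obs : ∀ k, Measure (D k)) [∀ k, IsProbabilityMeasure (P_obs k)]
    (habs : ∀ k, P_obs k ≪ Measure.map (Q k) (μ_init[|Λs k]))
    (w : Fin K → ℝ≥0) (hw : ∑ k, w k = 1) :
    IsProbabilityMeasure
      (∑ k, w k •
        (((μ_init[|Λs k]).restrict (Λs k)).withDensity
          (fun l => (P_obs k).rnDeriv (Measure.map (Q k) (μ_init[|Λs k])) (Q k l)))) := by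
  simp only [cond_restrict_self]
  have hprob : ∀ k, IsProbabilityMeasure ((μ_init[|Λs k]).withDensity
      fun l => (P_obs k).rnDeriv (Measure.map (Q k) (μ_init[|Λs k])) (Q k l)) :=
    fun k => isProbabilityMeasure_withDensity_rnDeriv_comp (hQ k) (habs k)
  exact isProbabilityMeasure_sum_smul _ _ w hw

/-- The clustered observation-consistent update
`μ_up(A) = Σ_k w_k ∫_{A∩Λ_k} R_k(Q_k(λ)) dμ_k(λ)` is a probability measure. -/
theorem clustered_update_isProbabilityMeasure
    {Λ : Type*} [MeasurableSpace Λ] {K : ℕ}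
    (Λs : Fin K → Set Λ) (hmeas : ∀ k, MeasurableSet (Λs k))
    (hdisj : Pairwise (Function.onFun Disjoint Λs))
    (hcover : (⋃ k, Λs k) = Set.univ)
    (μ_init : Measure Λ) [IsProbabilityMeasure μ_init]
    (hpos : ∀ k, 0 < μ_init (Λs k))
    (D : Fin K → Type*) [∀ k, MeasurableSpace (D k)]
    (Q : ∀ k, Λ → D k) (hQ : ∀ k, Measurable (Q k))
    (P_obs : ∀ k, Measure (D k)) [∀ k, IsProbabilityMeasure (P_obs k)]
    (habs : ∀ k, P_obs k ≪ Measure.map (Q k) (μ_init[|Λs k]))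
    (w : Fin K → ℝ≥0) (hw : ∑ k, w k = 1) :
    IsProbabilityMeasure
      (∑ k, w k •
        (((μ_init[|Λs k]).restrict (Λs k)).withDensity
          (fun l => (P_obs k).rnDeriv (Measure.map (Q k) (μ_init[|Λs k])) (Q k l)))) :=
  clustered_update_isProbabilityMeasure_general Λs μ_init D Q hQ P_obs habs w hw
end

section
/- Let Λ be a measurable space partitioned into finitely many measurable sets Λ_1, …, Λ_K, let μ_init be a probability measure on Λ with μ_init(Λ_k) > 0 for each k, and let μ_k denote the conditional probability measure of μ_init on Λ_k. For each k, let Q_k : Λ → D_k be a measurable map into a measurable space, let ν_k = (Q_k)_*μ_k, let P_obs,k be a probability measure on D_k absolutely continuous with respect to ν_k, and let R_k = dP_obs,k/dν_k. Let w_1, …, w_K be nonnegative real numbers with Σ_{k=1}^K w_k = 1, and let μ_up be the measure μ_up(A) = Σ_{k=1}^K w_k ∫_{A∩Λ_k} R_k(Q_k(λ)) dμ_k(λ). Then for each k, the push-forward under Q_k of the restriction of μ_up to Λ_k equals w_k·P_obs,k; in particular, the clustered update is observation-consistent cluster by cluster. -/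
open MeasureTheory ProbabilityTheory
open scoped ENNReal NNReal

lemma map_withDensity_comp' {α β : Type*} [MeasurableSpace α] [MeasurableSpace β]
    (μ : Measure α) {g : α → β} (hg : Measurable g) {f : β → ℝ≥0∞} (hf : Measurable f) :
    (μ.withDensity (fun x => f (g x))).map g = (μ.map g).withDensity f := by
  ext s hs
  rw [Measure.map_apply hg hs, withDensity_apply _ (hg hs), withDensity_apply _ hs,
    setLIntegral_map hs hf hg]

/-- The clustered observation-consistent update is observation-consistent cluster by
cluster: for each `k`, the push-forward under `Q_k` of the restriction of `μ_up` to
`Λ_k` equals `w_k • P_obs,k`. -/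
theorem clustered_update_observation_consistent
    {Λ : Type*} [MeasurableSpace Λ] {K : ℕ}
    (Λs : Fin K → Set Λ) (hmeas : ∀ k, MeasurableSet (Λs k))
    (hdisj : Pairwise (Function.onFun Disjoint Λs))
    (hcover : (⋃ k, Λs k) = Set.univ)
    (μ_init : Measure Λ) [IsProbabilityMeasure μ_init]
    (hpos : ∀ k, 0 < μ_init (Λs k))
    (D : Fin K → Type*) [∀ k, MeasurableSpace (D k)]
    (Q : ∀ k, Λ → D k) (hQ : ∀ k, Measurable (Q k))
    (P_obs : ∀ k, Measure (D k)) [∀ k, IsProbabilityMeasure (P_obs k)]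
    (habs : ∀ k, P_obs k ≪ Measure.map (Q k) (μ_init[|Λs k]))
    (w : Fin K → ℝ≥0) (hw : ∑ k, w k = 1)
    (μ_up : Measure Λ)
    (hup : μ_up = ∑ k, w k •
      (((μ_init[|Λs k]).restrict (Λs k)).withDensity
        (fun l => (P_obs k).rnDeriv (Measure.map (Q k) (μ_init[|Λs k])) (Q k l)))) :
    ∀ k, Measure.map (Q k) (μ_up.restrict (Λs k)) = w k • P_obs k := by
  intro k
  have hprob : ∀ j, IsProbabilityMeasure (μ_init[|Λs j]) := fun j =>
    cond_isProbabilityMeasure (hpos j).ne'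
  -- restrict of the sum
  have hrestrict : μ_up.restrict (Λs k) =
      (w k : ℝ≥0∞) • ((μ_init[|Λs k]).withDensity
        (fun l => (P_obs k).rnDeriv (Measure.map (Q k) (μ_init[|Λs k])) (Q k l))) := by
    rw [hup]
    have hterm : ∀ j, ((w j •
        (((μ_init[|Λs j]).restrict (Λs j)).withDensity
          (fun l => (P_obs j).rnDeriv (Measure.map (Q j) (μ_init[|Λs j]))
            (Q j l)))).restrict (Λs k)) =
        if j = k then (w k : ℝ≥0∞) • ((μ_init[|Λs k]).withDensity
          (fun l => (P_obs k).rnDeriv (Measure.map (Q k) (μ_init[|Λs k])) (Q k l)))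
        else 0 := by
      intro j
      rw [ENNReal.smul_def, Measure.restrict_smul, restrict_withDensity (hmeas k),
        Measure.restrict_restrict (hmeas k)]
      by_cases hjk : j = k
      · subst hjk
        simp only [if_true, Set.inter_self]
        congr 1
        rw [ProbabilityTheory.cond, Measure.restrict_smul,
          Measure.restrict_restrict (hmeas j), Set.inter_self]
      · rw [if_neg hjk, Set.disjoint_iff_inter_eq_empty.mp (hdisj (Ne.symm hjk)),
          Measure.restrict_empty]
        simp
    have hsum : (∑ j, w j •
        (((μ_init[|Λs j]).restrict (Λs j)).withDensity
          (fun l => (P_obs j).rnDeriv (Measure.map (Q j) (μ_init[|Λs j]))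
            (Q j l)))).restrict (Λs k) = ∑ j, ((w j •
        (((μ_init[|Λs j]).restrict (Λs j)).withDensity
          (fun l => (P_obs j).rnDeriv (Measure.map (Q j) (μ_init[|Λs j]))
            (Q j l)))).restrict (Λs k)) := by
      ext t ht
      simp [Measure.restrict_apply ht, Measure.finset_sum_apply]
    rw [hsum]
    simp only [hterm]
    simp [Finset.sum_ite_eq' Finset.univ k]
  rw [hrestrict, Measure.map_smul,
    map_withDensity_comp' _ (hQ k) (Measure.measurable_rnDeriv _ _),
    Measure.withDensity_rnDeriv_eq _ _ (habs k), ENNReal.smul_def]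
end

section
/- Let 0 < a < 1/8 and b > 0, set τ = −(b⁴ + (2a−1)b² + a + a²)/(a+b²) and Δ = a + b², and define b₁(a) = √((1 − √(1−8a) − 2a)/2) and b₂(a) = √((1 + √(1−8a) − 2a)/2). Then both complex roots of the characteristic polynomial z² − τz + Δ have strictly negative real part if and only if b < b₁(a) or b > b₂(a). -/
/-- Routh–Hurwitz for a real monic quadratic with positive constant term:
all complex roots have negative real part iff the linear coefficient `-t` has `t < 0`. -/
lemma quad_roots_neg_re_iff (t d : ℝ) (hd : 0 < d) :
    (∀ z : ℂ, z ^ 2 - (t : ℂ) * z + (d : ℂ) = 0 → z.re < 0) ↔ t < 0 := by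
  constructor
  · intro h
    by_contra hτ
    push_neg at hτ
    by_cases hdisc : 0 ≤ t ^ 2 - 4 * d
    · set s := Real.sqrt (t ^ 2 - 4 * d) with hs
      have hs2 : s ^ 2 = t ^ 2 - 4 * d := Real.sq_sqrt hdisc
      have hs2c : (s : ℂ) ^ 2 = (t : ℂ) ^ 2 - 4 * (d : ℂ) := by exact_mod_cast congrArg (fun x : ℝ => (x : ℂ)) hs2
      have hroot : (((t + s) / 2 : ℝ) : ℂ) ^ 2 - (t : ℂ) * (((t + s) / 2 : ℝ) : ℂ)
          + (d : ℂ) = 0 := by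
        push_cast
        linear_combination (1/4 : ℂ) * hs2c
      have := h _ hroot
      simp at this
      nlinarith [Real.sqrt_nonneg (t ^ 2 - 4 * d)]
    · push_neg at hdisc
      set s := Real.sqrt (4 * d - t ^ 2) with hs
      have hs2 : s ^ 2 = 4 * d - t ^ 2 := Real.sq_sqrt (by linarith)
      have hroot : ((t / 2 : ℝ) + (s / 2 : ℝ) * Complex.I) ^ 2
          - (t : ℂ) * ((t / 2 : ℝ) + (s / 2 : ℝ) * Complex.I) + (d : ℂ) = 0 := by
        have hI : Complex.I ^ 2 = -1 := Complex.I_sq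
        have hs2c : (s : ℂ) ^ 2 = 4 * (d : ℂ) - (t : ℂ) ^ 2 := by
          exact_mod_cast congrArg (fun x : ℝ => (x : ℂ)) hs2
        push_cast
        linear_combination (-(1/4) : ℂ) * hs2c + ((s : ℂ) ^ 2 / 4) * hI
      have := h _ hroot
      simp at this
      linarith
  · intro ht z hz
    have h1 := congrArg Complex.re hz
    have h2 := congrArg Complex.im hz
    simp [pow_two, Complex.mul_re, Complex.mul_im] at h1 h2
    set x := z.re
    set y := z.im
    by_contra hx
    push_neg at hx
    have hy : y * (2 * x - t) = 0 := by linear_combination h2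
    rcases mul_eq_zero.mp hy with hy0 | hxt
    · nlinarith [hy0]
    · linarith

/-- For `0 < a < 1/8` and `b > 0`, with `τ = −(b⁴ + (2a−1)b² + a + a²)/(a+b²)` and
`Δ = a + b²`, both complex roots of the characteristic polynomial `z² − τz + Δ`
have strictly negative real part if and only if `b < b₁(a)` or `b > b₂(a)`. -/
theorem stable_focus_iff (a b : ℝ) (ha : 0 < a) (ha' : a < 1 / 8) (hb : 0 < b) :
    (∀ z : ℂ,
      z ^ 2 - (((-(b ^ 4 + (2 * a - 1) * b ^ 2 + a + a ^ 2) / (a + b ^ 2)) : ℝ) : ℂ) * z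
        + (((a + b ^ 2) : ℝ) : ℂ) = 0 → z.re < 0) ↔
    (b < Real.sqrt ((1 - Real.sqrt (1 - 8 * a) - 2 * a) / 2) ∨
      Real.sqrt ((1 + Real.sqrt (1 - 8 * a) - 2 * a) / 2) < b) := by
  have hden : 0 < a + b ^ 2 := by positivity
  rw [quad_roots_neg_re_iff _ _ hden]
  set s := Real.sqrt (1 - 8 * a) with hsdef
  have h8 : (0:ℝ) ≤ 1 - 8 * a := by linarith
  have hs2 : s ^ 2 = 1 - 8 * a := Real.sq_sqrt h8
  have hsnn : 0 ≤ s := Real.sqrt_nonneg _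
  have hspos : 0 < s := Real.sqrt_pos.mpr (by linarith)
  have hs1 : s < 1 - 2 * a := by nlinarith
  set L := (1 - s - 2 * a) / 2 with hL
  set U := (1 + s - 2 * a) / 2 with hU
  have hLpos : 0 < L := by rw [hL]; linarith
  have hLU : L < U := by rw [hL, hU]; linarith
  have hnum : b ^ 4 + (2 * a - 1) * b ^ 2 + a + a ^ 2 = (b ^ 2 - L) * (b ^ 2 - U) := by
    rw [hL, hU]; nlinarith [hs2]
  have hτ : -(b ^ 4 + (2 * a - 1) * b ^ 2 + a + a ^ 2) / (a + b ^ 2) < 0 ↔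
      0 < (b ^ 2 - L) * (b ^ 2 - U) := by
    rw [div_neg_iff]
    constructor
    · rintro (⟨h1, h2⟩ | ⟨h1, h2⟩)
      · linarith
      · linarith [hnum]
    · intro h
      right
      exact ⟨by linarith [hnum], hden⟩
  rw [hτ]
  have hb1 : b < Real.sqrt L ↔ b ^ 2 < L := Real.lt_sqrt hb.le
  have hb2 : Real.sqrt U < b ↔ U < b ^ 2 := Real.sqrt_lt' hb
  rw [hb1, hb2, mul_pos_iff]
  constructor
  · rintro (⟨h1, h2⟩ | ⟨h1, h2⟩)
    · right; linarith
    · left; linarith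
  · rintro (h | h)
    · right; constructor <;> linarith
    · left; constructor <;> linarith
end
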